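/- Let n ≥ 5, 3 ≤ j ≤ n−2, and let ρ = α 1 n β γ 2 j be a word on [n] where β is nonempty with last letter k satisfying j+1 ≤ k ≤ n−1, and γ consists of letters in {3,…,j−1}. Then ρ avoids both 1̄2̄3 and 41\overline{23} if and only if: (i) α and γ are decreasing, (ii) every letter of α lies in {3,…,j−1}, and (iii) β avoids both vincular patterns 1̄2̄3 and 1\overline{23}. -/

import Mathlib

open List

/-- `w` is a linear permutation of `[n] = {1,…,n}` written in one-line notation. -/
def IsPermOf (n : ℕ) (w : List ℕ) : Prop :=
  w.Perm ((List.range n).map (· + 1))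

/-- occurrence of the vincular pattern 1̄2̄3 : positions a, a+1, c with c > a+1
forming an increasing triple. -/
def Occ123 (w : List ℕ) : Prop :=
  ∃ a c, a + 1 < c ∧ c < w.length ∧
    w.getD a 0 < w.getD (a + 1) 0 ∧ w.getD (a + 1) 0 < w.getD c 0

/-- occurrence of the vincular pattern 41\overline{23} : positions a < b < c (and c+1)
with w_b < w_c < w_{c+1} < w_a. -/
def Occ4123 (w : List ℕ) : Prop :=
  ∃ a b c, a < b ∧ b < c ∧ c + 1 < w.length ∧
    w.getD b 0 < w.getD c 0 ∧ w.getD c 0 < w.getD (c + 1) 0 ∧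
    w.getD (c + 1) 0 < w.getD a 0

/-- occurrence of the vincular pattern 1\overline{23} : positions a < b (and b+1)
forming an increasing triple. -/
def Occ1_23 (w : List ℕ) : Prop :=
  ∃ a b, a < b ∧ b + 1 < w.length ∧
    w.getD a 0 < w.getD b 0 ∧ w.getD b 0 < w.getD (b + 1) 0

/-- occurrence of the vincular pattern \overline{23}41 : positions a, a+1, c, d with
a+1 < c < d and w_d < w_a < w_{a+1} < w_c. -/
def Occ2341 (w : List ℕ) : Prop :=
  ∃ a c d, a + 1 < c ∧ c < d ∧ d < w.length ∧
    w.getD d 0 < w.getD a 0 ∧ w.getD a 0 < w.getD (a + 1) 0 ∧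
    w.getD (a + 1) 0 < w.getD c 0

/-- a circular permutation (represented by any linear reading `w`) avoids
\overline{23}41 iff no cyclic rotation of `w` contains it. -/
def CircAvoids2341 (w : List ℕ) : Prop := ∀ k, ¬ Occ2341 (w.rotate k)

/-- the set `L_n` of linear permutations of `[n]` avoiding both 1̄2̄3 and 41\overline{23}. -/
def Lset (n : ℕ) : Set (List ℕ) :=
  {w | IsPermOf n w ∧ ¬ Occ123 w ∧ ¬ Occ4123 w}

/-- the permutation (n−1)(n−2)⋯1 n. -/
def excludedPerm (n : ℕ) : List ℕ :=
  ((List.range (n - 1)).map (· + 1)).reverse ++ [n]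

/-- `L_n^* = L_n \ {(n−1)(n−2)⋯1n}`. -/
def Lstar (n : ℕ) : Set (List ℕ) := Lset n \ {excludedPerm n}

/-- `B_n`: members of `L_n^*` in which 1 occurs to the right of n. -/
def Bset (n : ℕ) : Set (List ℕ) :=
  {w ∈ Lstar n | w.idxOf n < w.idxOf 1}

/-- `C_n`: members of `L_n^*` in which 1 occurs to the left of n and 2 to its right. -/
def Cset (n : ℕ) : Set (List ℕ) :=
  {w ∈ Lstar n | w.idxOf 1 < w.idxOf n ∧ w.idxOf n < w.idxOf 2}

/-- members of `B_n` ending in the two letters i, j. -/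
def Bnij (n i j : ℕ) : Set (List ℕ) :=
  {w ∈ Bset n | ∃ u, w = u ++ [i, j]}

/-- members of `C_n` ending in the two letters i, j. -/
def Cnij (n i j : ℕ) : Set (List ℕ) :=
  {w ∈ Cset n | ∃ u, w = u ++ [i, j]}

noncomputable def bcount (n i j : ℕ) : ℕ := (Bnij n i j).ncard
noncomputable def ccount (n i j : ℕ) : ℕ := (Cnij n i j).ncard

/-- `b(n,j)`: the number of members of `B_n` ending in the letter j. -/
noncomputable def bLast (n j : ℕ) : ℕ := Set.ncard {w ∈ Bset n | ∃ u, w = u ++ [j]}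

/-- `c(n,j)`: the number of members of `C_n` ending in the letter j. -/
noncomputable def cLast (n j : ℕ) : ℕ := Set.ncard {w ∈ Cset n | ∃ u, w = u ++ [j]}

/-- `V_n`: linear permutations of `[n]` avoiding both 1̄2̄3 and 1\overline{23}. -/
def Vset (n : ℕ) : Set (List ℕ) :=
  {w | IsPermOf n w ∧ ¬ Occ123 w ∧ ¬ Occ1_23 w}

/-- `v(n,j)`: the number of members of `V_n` ending in the letter j. -/
noncomputable def vcount (n j : ℕ) : ℕ := Set.ncard {w ∈ Vset n | ∃ u, w = u ++ [j]}

/-!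
When `α` and `γ` decrease and lie below `j`, the only adjacent ascents of `ρ` are `1 n`, the
ascents inside `β`, and the final `2 j`. An occurrence of `1̄2̄3` must then start at an ascent of
`β`, and since every letter after `β` is smaller than its last letter `k`, it can be completed
inside `β`. A `4` of `41\overline{23}` standing left of `n` is smaller than the final `j`, so it
would produce a `1̄2̄3`; otherwise the occurrence lies in `n β γ 2 j`, where the ascent `2 j` has
no smaller letter before it and `γ 2` descends from `k`, leaving a `1\overline{23}` in `β`.
Conversely, each failing condition yields an occurrence, with `n` or `2 j` as its large letters.
-/

theorem getD_append_length_add (u v : List ℕ) (i : ℕ) :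
    (u ++ v).getD (u.length + i) 0 = v.getD i 0 := by
  rw [getD_append_right _ _ _ _ (Nat.le_add_right _ _), Nat.add_sub_cancel_left]

theorem getD_mem_of_lt {w : List ℕ} {i : ℕ} (h : i < w.length) : w.getD i 0 ∈ w := by
  rw [getD_eq_getElem _ _ h]; exact getElem_mem h

theorem getD_succ_lt_of_isChain {w : List ℕ} (hw : w.IsChain (· > ·)) {i : ℕ}
    (hi : i + 1 < w.length) : w.getD (i + 1) 0 < w.getD i 0 := by
  rw [getD_eq_getElem _ _ hi, getD_eq_getElem _ _ (by omega)]
  exact isChain_iff_getElem.mp hw i hi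

theorem Occ123.append_left {v : List ℕ} (u : List ℕ) : Occ123 v → Occ123 (u ++ v) := by
  rintro ⟨a, c, hac, hc, h1, h2⟩
  refine ⟨u.length + a, u.length + c, by omega, by grind, ?_, ?_⟩ <;>
    simpa only [Nat.add_assoc, getD_append_length_add]

theorem Occ123.append_right {v : List ℕ} (u : List ℕ) : Occ123 v → Occ123 (v ++ u) := by
  rintro ⟨a, c, hac, hc, h1, h2⟩
  refine ⟨a, c, hac, by grind, ?_, ?_⟩ <;>
    rwa [getD_append _ _ _ _ (by omega), getD_append _ _ _ _ (by omega)]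

theorem Occ4123.append_left {v : List ℕ} (u : List ℕ) : Occ4123 v → Occ4123 (u ++ v) := by
  rintro ⟨a, b, c, hab, hbc, hc, h1, h2, h3⟩
  refine ⟨u.length + a, u.length + b, u.length + c, by omega, by omega, by grind,
    ?_, ?_, ?_⟩ <;> simpa only [Nat.add_assoc, getD_append_length_add]

theorem Occ4123.append_right {v : List ℕ} (u : List ℕ) : Occ4123 v → Occ4123 (v ++ u) := by
  rintro ⟨a, b, c, hab, hbc, hc, h1, h2, h3⟩
  refine ⟨a, b, c, hab, hbc, by grind, ?_, ?_, ?_⟩ <;>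
    rwa [getD_append _ _ _ _ (by omega), getD_append _ _ _ _ (by omega)]

theorem occ123_of_eq_append {w u v : List ℕ} {x y z : ℕ} (hw : w = u ++ x :: y :: v)
    (hxy : x < y) (hz : z ∈ v) (hyz : y < z) : Occ123 w := by
  obtain ⟨m, hm, rfl⟩ := getElem_of_mem hz
  subst hw
  refine ⟨u.length, u.length + m + 2, by omega, by grind, ?_, ?_⟩ <;> grind

theorem occ4123_of_eq_append {w u v t : List ℕ} {a b c d : ℕ}
    (hw : w = u ++ a :: v ++ b :: t ++ [c, d]) (hbc : b < c) (hcd : c < d) (hda : d < a) :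
    Occ4123 w := by
  subst hw
  refine ⟨u.length, u.length + v.length + 1, u.length + v.length + t.length + 2,
    by omega, by omega, by grind, ?_, ?_, ?_⟩ <;> grind

theorem occ4123_cons_of_occ1_23 {w : List ℕ} {x : ℕ} (hx : ∀ y ∈ w, y < x) :
    Occ1_23 w → Occ4123 (x :: w) := by
  rintro ⟨a, b, hab, hb, h1, h2⟩
  exact ⟨0, a + 1, b + 1, by omega, by omega, by grind, h1, h2, hx _ (getD_mem_of_lt hb)⟩

theorem pairwise_gt_of_not_occ123 {u v : List ℕ} (hu : u.Nodup) (hv : ∀ y ∈ u, ∃ z ∈ v, y < z)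
    (h : ¬ Occ123 (u ++ v)) : u.Pairwise (· > ·) := by
  refine isChain_iff_pairwise.mp (isChain_iff_forall_rel_of_append_cons_cons.mpr ?_)
  rintro x y l₁ l₂ rfl
  have hxy : x ≠ y := by simp_all [nodup_append]
  obtain ⟨z, hz, hyz⟩ := hv y (by simp)
  by_contra hle
  exact h (occ123_of_eq_append (u := l₁) (x := x) (v := l₂ ++ v) (by simp) (by omega)
    (mem_append_right _ hz) hyz)

theorem le_of_not_occ4123 {u v : List ℕ} {b c d x : ℕ} (h : ¬ Occ4123 (u ++ b :: v ++ [c, d]))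
    (hbc : b < c) (hcd : c < d) (hx : x ∈ u) : x ≤ d := by
  obtain ⟨s, t, rfl⟩ := append_of_mem hx
  by_contra hdx
  exact h (occ4123_of_eq_append (u := s) (a := x) (v := t) (t := v) (by simp) hbc hcd (by omega))

theorem not_occ123_append_pair {u : List ℕ} {x y : ℕ} (hu : (u ++ [x]).IsChain (· > ·)) :
    ¬ Occ123 (u ++ [x, y]) := by
  rintro ⟨a, c, hac, hc, h1, -⟩
  have h := getD_succ_lt_of_isChain hu (i := a) (by grind)
  grind

theorem Occ123.of_append_cons {u v : List ℕ} {k : ℕ} (hv : ∀ z ∈ v, z < k) :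
    Occ123 (u ++ k :: v) → Occ123 (u ++ [k]) ∨ Occ123 v := by
  rintro ⟨a, c, hac, hc, h1, h2⟩
  simp only [length_append, length_cons] at hc
  rcases lt_trichotomy a u.length with ha | rfl | ha
  · left
    by_cases hcu : c ≤ u.length
    · refine ⟨a, c, hac, by grind, ?_, ?_⟩ <;> grind
    · have := hv _ (getD_mem_of_lt (w := v) (i := c - u.length - 1) (by omega))
      refine ⟨a, u.length, ?_, by simp, ?_, ?_⟩ <;> grind
  · have := hv _ (getD_mem_of_lt (w := v) (i := 0) (by omega))
    grind
  · right
    refine ⟨a - u.length - 1, c - u.length - 1, by omega, by omega, ?_, ?_⟩ <;> grind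

/-- If the `4` of an occurrence lies in `u`, the final letter `y` exceeds the top of its ascent
`23`, so that ascent followed by `y` is an occurrence of `1̄2̄3`. -/
theorem Occ4123.occ123_or_of_append {u v : List ℕ} {y : ℕ} (hu : ∀ x ∈ u, x < y) :
    Occ4123 (u ++ v ++ [y]) → Occ123 (u ++ v ++ [y]) ∨ Occ4123 (v ++ [y]) := by
  rintro ⟨a, b, c, hab, hbc, hc, h1, h2, h3⟩
  simp only [length_append, length_cons, length_nil] at hc
  by_cases ha : a < u.length
  · left
    have := hu _ (getD_mem_of_lt ha)
    refine ⟨c, u.length + v.length, ?_, by simp, h2, ?_⟩ <;> grind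
  · right
    refine ⟨a - u.length, b - u.length, c - u.length, by omega, by omega, by grind,
      ?_, ?_, ?_⟩ <;> grind

theorem Occ4123.occ1_23_of_cons {w : List ℕ} {x : ℕ} : Occ4123 (x :: w) → Occ1_23 w := by
  rintro ⟨a, b, c, hab, hbc, hc, h1, h2, -⟩
  obtain ⟨b, rfl⟩ : ∃ b', b = b' + 1 := ⟨b - 1, by omega⟩
  obtain ⟨c, rfl⟩ : ∃ c', c = c' + 1 := ⟨c - 1, by omega⟩
  exact ⟨b, c, by omega, by simpa using hc, h1, h2⟩

theorem Occ1_23.of_append_pair {w : List ℕ} {x y : ℕ} (hw : ∀ z ∈ w, x ≤ z) :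
    Occ1_23 (w ++ [x, y]) → Occ1_23 (w ++ [x]) := by
  rintro ⟨a, b, hab, hb, h1, h2⟩
  simp only [length_append, length_cons, length_nil] at hb
  have := hw _ (getD_mem_of_lt (w := w) (i := a) (by omega))
  refine ⟨a, b, hab, ?_, ?_, ?_⟩ <;> grind

theorem Occ1_23.of_append_cons_of_isChain {u v : List ℕ} {k : ℕ}
    (hv : (k :: v).IsChain (· > ·)) : Occ1_23 (u ++ k :: v) → Occ1_23 (u ++ [k]) := by
  rintro ⟨a, b, hab, hb, h1, h2⟩
  simp only [length_append, length_cons] at hb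
  by_cases hbu : b < u.length
  · refine ⟨a, b, hab, by grind, ?_, ?_⟩ <;> grind
  · have := getD_succ_lt_of_isChain hv (i := b - u.length) (by grind)
    grind

theorem isChain_append_singleton {l : List ℕ} {x : ℕ} (hl : l.Pairwise (· > ·))
    (hx : ∀ y ∈ l, x < y) : (l ++ [x]).IsChain (· > ·) :=
  isChain_iff_pairwise.mpr (pairwise_append.mpr ⟨hl, pairwise_singleton _ _, by simpa using hx⟩)

theorem IsPermOf.nodup {n : ℕ} {w : List ℕ} (h : IsPermOf n w) : w.Nodup :=
  h.nodup_iff.mpr (nodup_range.map (add_left_injective 1))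

theorem IsPermOf.mem_Icc {n z : ℕ} {w : List ℕ} (h : IsPermOf n w) (hz : z ∈ w) :
    1 ≤ z ∧ z ≤ n := by
  obtain ⟨y, hy, rfl⟩ := mem_map.mp (h.mem_iff.mp hz)
  simp only [mem_range] at hy; omega

theorem IsPermOf.bounds_of_mem_inner {n j : ℕ} {α β γ : List ℕ}
    (h : IsPermOf n (α ++ 1 :: n :: (β ++ γ ++ [2, j]))) :
    ∀ z ∈ α ++ β ++ γ, 3 ≤ z ∧ z < n ∧ z ≠ j := by
  have hp : (1 :: n :: 2 :: j :: (α ++ β ++ γ)).Perm (α ++ 1 :: n :: (β ++ γ ++ [2, j])) := by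
    rw [perm_iff_count]; intro a; simp [count_cons]; omega
  intro z hz
  have hb := h.mem_Icc (z := z) (hp.subset (by grind))
  have hnd := hp.nodup_iff.mpr h.nodup
  simp only [nodup_cons, mem_cons, not_or] at hnd
  grind

section
variable {α β γ : List ℕ} {n j k : ℕ}

theorem shape_conditions_of_avoids (hperm : IsPermOf n (α ++ 1 :: n :: (β ++ γ ++ [2, j])))
    (hγj : ∀ x ∈ γ, x < j) (hj : 2 < j)
    (h123 : ¬ Occ123 (α ++ 1 :: n :: (β ++ γ ++ [2, j])))
    (h4123 : ¬ Occ4123 (α ++ 1 :: n :: (β ++ γ ++ [2, j]))) :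
    α.Pairwise (· > ·) ∧ γ.Pairwise (· > ·) ∧ (∀ x ∈ α, 3 ≤ x ∧ x ≤ j - 1) ∧
      ¬ Occ123 β ∧ ¬ Occ1_23 β := by
  have hαn : ∀ x ∈ α, 3 ≤ x ∧ x < n ∧ x ≠ j := fun x hx =>
    hperm.bounds_of_mem_inner x (by simp [hx])
  have hβn : ∀ x ∈ β, x < n := fun x hx => (hperm.bounds_of_mem_inner x (by simp [hx])).2.1
  have hnd := nodup_append.mp hperm.nodup
  have hα : α.Pairwise (· > ·) :=
    pairwise_gt_of_not_occ123 hnd.1 (fun y hy => ⟨n, by simp, (hαn y hy).2.1⟩) h123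
  have hγ : γ.Pairwise (· > ·) :=
    pairwise_gt_of_not_occ123 (v := [2, j])
      (hnd.2.1.sublist (IsInfix.sublist ⟨1 :: n :: β, [2, j], by simp⟩))
      (fun y hy => ⟨j, by simp, hγj y hy⟩)
      fun h => h123 (by simpa using h.append_left (α ++ 1 :: n :: β))
  have hβ123 : ¬ Occ123 β := fun h =>
    h123 (by simpa using (h.append_left (α ++ [1, n])).append_right (γ ++ [2, j]))
  have hβ1_23 : ¬ Occ1_23 β := fun h => h4123 (by
    have := ((occ4123_cons_of_occ1_23 hβn h).append_left (α ++ [1])).append_right (γ ++ [2, j])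
    simpa only [append_assoc, cons_append, nil_append] using this)
  refine ⟨hα, hγ, fun x hx => ?_, hβ123, hβ1_23⟩
  have := le_of_not_occ4123 (v := n :: (β ++ γ)) (by simpa using h4123) one_lt_two hj hx
  have := hαn x hx
  omega

theorem not_occ123_of_conditions (hα : α.Pairwise (· > ·)) (hα1 : ∀ x ∈ α, 1 < x)
    (hγ : γ.Pairwise (· > ·)) (hγk : ∀ x ∈ γ, 2 < x ∧ x < k) (hβn : ∀ z ∈ β, z < n)
    (hkn : k < n) (hjk : j < k) (h2 : 2 < k) (h123 : ¬ Occ123 (β ++ [k])) :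
    ¬ Occ123 (α ++ 1 :: n :: (β ++ [k] ++ γ ++ [2, j])) := by
  have hlt : ∀ z ∈ γ ++ [2, j], z < k := fun z hz => by
    rcases mem_append.mp hz with hz | hz
    exacts [(hγk z hz).2, by simp at hz; omega]
  have hrest : ∀ z ∈ β ++ k :: (γ ++ [2, j]), z < n := fun z hz => by
    rcases mem_append.mp hz with hz | hz
    · exact hβn z hz
    · rcases mem_cons.mp hz with rfl | hz
      exacts [hkn, (hlt z hz).trans hkn]
  intro h
  rw [show α ++ 1 :: n :: (β ++ [k] ++ γ ++ [2, j]) = (α ++ [1]) ++ n :: (β ++ k :: (γ ++ [2, j]))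
    by simp] at h
  rcases h.of_append_cons hrest with h | h
  · exact not_occ123_append_pair (isChain_append_singleton hα hα1) (by simpa using h)
  rcases h.of_append_cons hlt with h | h
  · exact h123 h
  · exact not_occ123_append_pair (isChain_append_singleton hγ fun x hx => (hγk x hx).1) h

theorem not_occ4123_of_conditions (hα : ∀ x ∈ α, x < j) (hj : 1 < j)
    (hγ : γ.Pairwise (· > ·)) (hγk : ∀ x ∈ γ, 2 < x ∧ x < k) (h2 : 2 < k)
    (hmid : ∀ z ∈ β ++ [k] ++ γ, 2 ≤ z)
    (h123 : ¬ Occ123 (α ++ 1 :: n :: (β ++ [k] ++ γ ++ [2, j])))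
    (h1_23 : ¬ Occ1_23 (β ++ [k])) :
    ¬ Occ4123 (α ++ 1 :: n :: (β ++ [k] ++ γ ++ [2, j])) := by
  intro h
  rw [show α ++ 1 :: n :: (β ++ [k] ++ γ ++ [2, j]) =
    (α ++ [1]) ++ n :: (β ++ [k] ++ γ ++ [2]) ++ [j] by simp] at h h123
  rcases h.occ123_or_of_append (fun x hx => by
    rcases mem_append.mp hx with hx | hx
    exacts [hα x hx, by simpa [mem_singleton.mp hx]]) with h | h
  · exact h123 h
  have h := Occ1_23.of_append_pair hmid (by simpa using h.occ1_23_of_cons)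
  have hchain : (k :: γ ++ [2]).IsChain (· > ·) :=
    isChain_append_singleton (pairwise_cons.mpr ⟨fun x hx => (hγk x hx).2, hγ⟩)
      (by simpa using ⟨h2, fun x hx => (hγk x hx).1⟩)
  exact h1_23 (Occ1_23.of_append_cons_of_isChain hchain (by simpa using h))

theorem avoids_of_shape_conditions
    (hperm : IsPermOf n (α ++ 1 :: n :: (β ++ [k] ++ γ ++ [2, j])))
    (hγj : ∀ x ∈ γ, 3 ≤ x ∧ x ≤ j - 1) (hj : 3 ≤ j) (hjk : j + 1 ≤ k)
    (hα : α.Pairwise (· > ·)) (hγ : γ.Pairwise (· > ·)) (hαj : ∀ x ∈ α, 3 ≤ x ∧ x ≤ j - 1)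
    (h123 : ¬ Occ123 (β ++ [k])) (h1_23 : ¬ Occ1_23 (β ++ [k])) :
    ¬ Occ123 (α ++ 1 :: n :: (β ++ [k] ++ γ ++ [2, j])) ∧
      ¬ Occ4123 (α ++ 1 :: n :: (β ++ [k] ++ γ ++ [2, j])) := by
  have hm := hperm.bounds_of_mem_inner
  have hγk : ∀ x ∈ γ, 2 < x ∧ x < k := fun x hx => by have := hγj x hx; omega
  have hρ123 := not_occ123_of_conditions (j := j) hα (fun x hx => by have := hαj x hx; omega)
    hγ hγk (fun z hz => (hm z (by simp [hz])).2.1) (hm k (by simp)).2.1 (by omega) (by omega)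
    h123
  exact ⟨hρ123, not_occ4123_of_conditions (fun x hx => by have := hαj x hx; omega) (by omega)
    hγ hγk (by omega) (fun z hz => by have := hm z (by simp at hz ⊢; tauto); omega) hρ123 h1_23⟩

end

theorem stmt14_general (n j k : ℕ) (hj3 : 3 ≤ j)
    (α β γ ρ : List ℕ)
    (hρ : ρ = α ++ 1 :: n :: (β ++ γ ++ [2, j]))
    (hperm : IsPermOf n ρ)
    (hk : β.getLast? = some k) (hk1 : j + 1 ≤ k)
    (hγ : ∀ x ∈ γ, 3 ≤ x ∧ x ≤ j - 1) :
    (¬ Occ123 ρ ∧ ¬ Occ4123 ρ) ↔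
      (List.Pairwise (· > ·) α ∧ List.Pairwise (· > ·) γ ∧
       (∀ x ∈ α, 3 ≤ x ∧ x ≤ j - 1) ∧
       ¬ Occ123 β ∧ ¬ Occ1_23 β) := by
  subst hρ
  obtain ⟨β, rfl⟩ := getLast?_eq_some_iff.mp hk
  constructor
  · rintro ⟨h123, h4123⟩
    exact shape_conditions_of_avoids hperm (fun x hx => by have := hγ x hx; omega) (by omega)
      h123 h4123
  · rintro ⟨hα, hγd, hαj, h123, h1_23⟩
    exact avoids_of_shape_conditions hperm hγ hj3 hk1 hα hγd hαj h123 h1_23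

theorem stmt14 (n j k : ℕ) (hn : 5 ≤ n) (hj3 : 3 ≤ j) (hj : j ≤ n - 2)
    (α β γ ρ : List ℕ)
    (hρ : ρ = α ++ 1 :: n :: (β ++ γ ++ [2, j]))
    (hperm : IsPermOf n ρ)
    (hβne : β ≠ []) (hk : β.getLast? = some k) (hk1 : j + 1 ≤ k) (hk2 : k ≤ n - 1)
    (hγ : ∀ x ∈ γ, 3 ≤ x ∧ x ≤ j - 1) :
    (¬ Occ123 ρ ∧ ¬ Occ4123 ρ) ↔
      (List.Pairwise (· > ·) α ∧ List.Pairwise (· > ·) γ ∧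
       (∀ x ∈ α, 3 ≤ x ∧ x ≤ j - 1) ∧
       ¬ Occ123 β ∧ ¬ Occ1_23 β) :=
  stmt14_general n j k hj3 α β γ ρ hρ hperm hk hk1 hγ
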